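/- arXiv:1311.0637 — 4 statements merged into one kernel-verified Lean document; each statement's English description precedes it below -/
import Mathlib

section
/- In the generalized Thompson group G = F_{n,∞} = ⟨x_0, x_1, ... | x_i^{x_j} = x_{i+n-1} for i > j ≥ 0⟩, the abelianization G/G' is free abelian of rank n, with basis the images of x_0, x_1, ..., x_{n-1}. -/
/-- The defining relators of the generalised Thompson group `F_{n,∞}`:
`x_j⁻¹ x_i x_j x_{i+n-1}⁻¹` for `i > j ≥ 0`. -/
def thompsonRels (n : ℕ) : Set (FreeGroup ℕ) :=
  {r | ∃ i j : ℕ, j < i ∧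
    r = (FreeGroup.of j)⁻¹ * FreeGroup.of i * FreeGroup.of j * (FreeGroup.of (i + n - 1))⁻¹}

/-- The generalised Thompson group `F_{n,∞}`. -/
abbrev FnInfty (n : ℕ) : Type := PresentedGroup (thompsonRels n)

/-- The generator `x_i` of `F_{n,∞}`. -/
def xg (n i : ℕ) : FnInfty n := PresentedGroup.of i

/-!
In the abelianization the relation `x_j⁻¹ x_i x_j = x_{i+n-1}` (taking `j = 0`) says
`x_{i+n-1} = x_i` for `i ≥ 1`, so every `x_i` equals some `x_r` with `r < n`: `r = 0` if `i = 0`,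
and `r ≡ i (mod n - 1)` with `1 ≤ r ≤ n - 1` otherwise. Conversely `x_i ↦ e_r` respects all
relations, since they become `e_r = e_r` in the abelian group `ℤⁿ`; the induced map is inverse
to `e_r ↦ x_r`.
-/

theorem PresentedGroup.mk_eq_one_of_mem {α : Type*} {rels : Set (FreeGroup α)} {r : FreeGroup α}
    (hr : r ∈ rels) : PresentedGroup.mk rels r = 1 :=
  (QuotientGroup.eq_one_iff r).2 (Subgroup.subset_normalClosure hr)

namespace FnInfty

variable {n : ℕ}

def residue (n i : ℕ) : ℕ := if i = 0 then 0 else (i - 1) % (n - 1) + 1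

theorem residue_lt (hn : 2 ≤ n) (i : ℕ) : residue n i < n := by
  have : (i - 1) % (n - 1) < n - 1 := Nat.mod_lt _ (by omega)
  unfold residue
  split <;> omega

theorem residue_of_lt {i : ℕ} (hi : i < n) : residue n i = i := by
  unfold residue
  split
  · omega
  · rw [Nat.mod_eq_of_lt (by omega)]
    omega

theorem residue_add_sub_one (hn : 0 < n) {i : ℕ} (hi : 0 < i) :
    residue n (i + n - 1) = residue n i := by
  unfold residue
  rw [if_neg (by omega), if_neg (by omega), show i + n - 1 - 1 = i - 1 + (n - 1) by omega,
    Nat.add_mod_right]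

theorem xg_conj (n : ℕ) {i j : ℕ} (hji : j < i) :
    (xg n j)⁻¹ * xg n i * xg n j = xg n (i + n - 1) :=
  mul_inv_eq_one.mp <| by
    simpa only [xg, PresentedGroup.of, map_mul, map_inv] using
      PresentedGroup.mk_eq_one_of_mem (rels := thompsonRels n) ⟨i, j, hji, rfl⟩

theorem of_xg_add_sub_one {i : ℕ} (hi : 0 < i) :
    Abelianization.of (xg n (i + n - 1)) = Abelianization.of (xg n i) := by
  rw [← xg_conj n hi, map_mul, map_mul, map_inv]
  exact inv_mul_cancel_comm _ _

theorem of_xg_residue (hn : 2 ≤ n) (i : ℕ) :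
    Abelianization.of (xg n (residue n i)) = Abelianization.of (xg n i) := by
  induction i using Nat.strong_induction_on with
  | _ i ih =>
    rcases lt_or_ge i n with hi | hi
    · rw [residue_of_lt hi]
    · obtain ⟨k, hk, rfl⟩ : ∃ k, 0 < k ∧ k + n - 1 = i := ⟨i - (n - 1), by omega, by omega⟩
      rw [residue_add_sub_one (by omega) hk, of_xg_add_sub_one hk]
      exact ih k (by omega)

def toPi (hn : 2 ≤ n) : FnInfty n →* Multiplicative (Fin n → ℤ) :=
  PresentedGroup.toGroup
    (f := fun i => Multiplicative.ofAdd (Pi.single ⟨residue n i, residue_lt hn i⟩ 1)) <| by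
    rintro r ⟨i, j, hji, rfl⟩
    simp only [map_mul, map_inv, FreeGroup.lift_apply_of,
      residue_add_sub_one (n := n) (by omega) (show 0 < i by omega)]
    exact mul_inv_eq_one.2 (inv_mul_cancel_comm _ _)

theorem toPi_xg (hn : 2 ≤ n) (i : ℕ) :
    toPi hn (xg n i) =
      Multiplicative.ofAdd (Pi.single ⟨residue n i, residue_lt hn i⟩ 1) :=
  PresentedGroup.toGroup.of _

noncomputable def abelianizationToPi (hn : 2 ≤ n) :
    Additive (Abelianization (FnInfty n)) →+ (Fin n → ℤ) :=
  (Abelianization.lift (toPi hn)).toAdditiveLeft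

theorem abelianizationToPi_of_xg (hn : 2 ≤ n) (i : ℕ) :
    abelianizationToPi hn (Additive.ofMul (Abelianization.of (xg n i))) =
      Pi.single ⟨residue n i, residue_lt hn i⟩ 1 := by
  simp [abelianizationToPi, toPi_xg]

noncomputable def piToAbelianization (n : ℕ) :
    (Fin n → ℤ) →+ Additive (Abelianization (FnInfty n)) :=
  (Pi.basisFun ℤ (Fin n)).constr ℤ fun i => Additive.ofMul (Abelianization.of (xg n i))

theorem piToAbelianization_single (i : Fin n) :
    piToAbelianization n (Pi.single i 1) = Additive.ofMul (Abelianization.of (xg n i)) := by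
  simp [piToAbelianization]

noncomputable def abelianizationEquiv (hn : 2 ≤ n) :
    Additive (Abelianization (FnInfty n)) ≃+ (Fin n → ℤ) :=
  AddMonoidHom.toAddEquiv (abelianizationToPi hn) (piToAbelianization n)
    (by
      apply AddMonoidHom.toMultiplicative.injective
      refine Abelianization.hom_ext _ _ (PresentedGroup.ext fun i => ?_)
      change piToAbelianization n (abelianizationToPi hn (.ofMul (.of (xg n i)))) =
        .ofMul (.of (xg n i))
      rw [abelianizationToPi_of_xg, piToAbelianization_single, of_xg_residue hn])
    (by
      ext i : 1
      refine AddMonoidHom.ext_int ?_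
      change abelianizationToPi hn (piToAbelianization n (Pi.single i 1)) = Pi.single i 1
      rw [piToAbelianization_single, abelianizationToPi_of_xg]
      simp only [residue_of_lt i.2])

theorem abelianizationEquiv_symm_single (hn : 2 ≤ n) (i : Fin n) :
    (abelianizationEquiv hn).symm (Pi.single i 1) = Additive.ofMul (Abelianization.of (xg n i)) :=
  piToAbelianization_single i

end FnInfty

/-- The abelianization of `F_{n,∞}` is free abelian of rank `n`, with basis the images of
`x_0, ..., x_{n-1}`. -/
theorem stmt_4 (n : ℕ) (hn : 2 ≤ n) :
    ∃ b : Module.Basis (Fin n) ℤ (Additive (Abelianization (FnInfty n))),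
      ∀ i : Fin n, b i = Additive.ofMul (Abelianization.of (xg n i)) :=
  ⟨.ofEquivFun (FnInfty.abelianizationEquiv hn).toIntLinearEquiv, fun i => by
    rw [Module.Basis.coe_ofEquivFun]
    exact FnInfty.abelianizationEquiv_symm_single hn i⟩
end

section
/- In G = F_{n,∞}, conjugation by x_0 maps x_i to x_{i+n-1} for all i ≥ 1; consequently the union ∪_{j ≥ 0} M^{x_0^j} equals M, where M = ⟨x_1, x_2, ..., x_n⟩, and K = ∪_{j∈ℤ} M^{x_0^j} is a normal subgroup of G with G/K infinite cyclic. -/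
/-- The subgroup `M = ⟨x_1, ..., x_n⟩` of `F_{n,∞}`. -/
def Msub (n : ℕ) : Subgroup (FnInfty n) := Subgroup.closure (xg n '' {i | 1 ≤ i ∧ i ≤ n})

lemma xg_rel (n : ℕ) {i j : ℕ} (h : j < i) :
    (xg n j)⁻¹ * xg n i * xg n j = xg n (i + n - 1) := by
  have hr : ((FreeGroup.of j)⁻¹ * FreeGroup.of i * FreeGroup.of j
      * (FreeGroup.of (i + n - 1))⁻¹ : FreeGroup ℕ) ∈ thompsonRels n := ⟨i, j, h, rfl⟩
  have h1 : (PresentedGroup.mk (thompsonRels n) ((FreeGroup.of j)⁻¹ * FreeGroup.of i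
      * FreeGroup.of j * (FreeGroup.of (i + n - 1))⁻¹)) = 1 :=
    (QuotientGroup.eq_one_iff _).2 (Subgroup.subset_normalClosure hr)
  have h2 : (xg n j)⁻¹ * xg n i * xg n j * (xg n (i + n - 1))⁻¹ = 1 := by
    simpa [xg, PresentedGroup.of, map_mul, map_inv] using h1
  exact mul_inv_eq_one.mp h2

lemma xg_mem_M (n : ℕ) (hn : 2 ≤ n) : ∀ i : ℕ, 1 ≤ i → xg n i ∈ Msub n := by
  intro i
  induction i using Nat.strong_induction_on with
  | _ i ih =>
    intro hi
    by_cases h : i ≤ n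
    · exact Subgroup.subset_closure ⟨i, ⟨hi, h⟩, rfl⟩
    · push_neg at h
      have hk : i - n + 1 + n - 1 = i := by omega
      have hrel := xg_rel n (i := i - n + 1) (j := 1) (by omega)
      rw [hk] at hrel
      rw [← hrel]
      have hx1 : xg n 1 ∈ Msub n := Subgroup.subset_closure ⟨1, ⟨le_refl 1, by omega⟩, rfl⟩
      have hx : xg n (i - n + 1) ∈ Msub n := ih (i - n + 1) (by omega) (by omega)
      exact Subgroup.mul_mem _ (Subgroup.mul_mem _ (Subgroup.inv_mem _ hx1) hx) hx1

lemma conj_mem (n : ℕ) (hn : 2 ≤ n) {m : FnInfty n} (hm : m ∈ Msub n) :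
    (xg n 0)⁻¹ * m * xg n 0 ∈ Msub n := by
  have hle : (Msub n).map (MulAut.conj ((xg n 0)⁻¹)).toMonoidHom ≤ Msub n := by
    rw [Msub, MonoidHom.map_closure, Subgroup.closure_le]
    rintro _ ⟨_, ⟨i, ⟨hi1, hi2⟩, rfl⟩, rfl⟩
    have : (MulAut.conj ((xg n 0)⁻¹)).toMonoidHom (xg n i) = xg n (i + n - 1) := by
      show (xg n 0)⁻¹ * xg n i * ((xg n 0)⁻¹)⁻¹ = _
      rw [inv_inv]
      exact xg_rel n (by omega)
    rw [this]
    exact xg_mem_M n hn _ (by omega)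
  have h1 : (MulAut.conj ((xg n 0)⁻¹)).toMonoidHom m ∈ (Msub n).map _ :=
    Subgroup.mem_map_of_mem _ hm
  have h2 := hle h1
  have h3 : (MulAut.conj ((xg n 0)⁻¹)).toMonoidHom m = (xg n 0)⁻¹ * m * xg n 0 := by
    show (xg n 0)⁻¹ * m * ((xg n 0)⁻¹)⁻¹ = _
    rw [inv_inv]
  rwa [h3] at h2

lemma conj_pow_mem (n : ℕ) (hn : 2 ≤ n) (j : ℕ) {m : FnInfty n} (hm : m ∈ Msub n) :
    ((xg n 0) ^ j)⁻¹ * m * (xg n 0) ^ j ∈ Msub n := by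
  induction j with
  | zero => simpa using hm
  | succ k ih =>
    have : ((xg n 0) ^ (k + 1))⁻¹ * m * (xg n 0) ^ (k + 1)
        = (xg n 0)⁻¹ * (((xg n 0) ^ k)⁻¹ * m * (xg n 0) ^ k) * xg n 0 := by
      rw [pow_succ]; group
    rw [this]
    exact conj_mem n hn ih

/-- The conjugation subgroups `S j = (x_0^j)⁻¹ M x_0^j`. -/
def Ssub (n : ℕ) (j : ℤ) : Subgroup (FnInfty n) :=
  (Msub n).map (MulAut.conj (((xg n 0) ^ j)⁻¹)).toMonoidHom

lemma Ssub_coe (n : ℕ) (j : ℤ) :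
    (Ssub n j : Set (FnInfty n)) =
      (fun m => ((xg n 0) ^ j)⁻¹ * m * (xg n 0) ^ j) '' (Msub n : Set (FnInfty n)) := by
  have hf : ⇑(MulAut.conj (((xg n 0) ^ j)⁻¹)).toMonoidHom
      = fun m => ((xg n 0) ^ j)⁻¹ * m * (xg n 0) ^ j := by
    funext m
    show ((xg n 0) ^ j)⁻¹ * m * (((xg n 0) ^ j)⁻¹)⁻¹ = _
    rw [inv_inv]
  rw [Ssub, Subgroup.coe_map, hf]

lemma Ssub_antitone (n : ℕ) (hn : 2 ≤ n) : Antitone (Ssub n) := by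
  apply antitone_int_of_succ_le
  intro j
  rintro _ ⟨m, hm, rfl⟩
  refine ⟨(xg n 0)⁻¹ * m * xg n 0, conj_mem n hn hm, ?_⟩
  show ((xg n 0) ^ j)⁻¹ * ((xg n 0)⁻¹ * m * xg n 0) * (((xg n 0) ^ j)⁻¹)⁻¹
      = ((xg n 0) ^ (j + 1))⁻¹ * m * (((xg n 0) ^ (j + 1))⁻¹)⁻¹
  group

lemma Ssub_directed (n : ℕ) (hn : 2 ≤ n) : Directed (· ≤ ·) (Ssub n) :=
  fun i j => ⟨min i j, Ssub_antitone n hn (min_le_left i j),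
    Ssub_antitone n hn (min_le_right i j)⟩

lemma mem_Ssub (n : ℕ) (j : ℤ) {m : FnInfty n} (hm : m ∈ Msub n) :
    ((xg n 0) ^ j)⁻¹ * m * (xg n 0) ^ j ∈ Ssub n j := by
  refine ⟨m, hm, ?_⟩
  show ((xg n 0) ^ j)⁻¹ * m * (((xg n 0) ^ j)⁻¹)⁻¹ = _
  rw [inv_inv]

lemma xg_mem_K (n : ℕ) (hn : 2 ≤ n) (i : ℕ) (hi : 1 ≤ i) : xg n i ∈ ⨆ j : ℤ, Ssub n j := by
  have h0 : xg n i ∈ Ssub n 0 := by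
    have := mem_Ssub n 0 (xg_mem_M n hn i hi)
    simpa using this
  exact (Subgroup.mem_iSup_of_directed (Ssub_directed n hn)).2 ⟨0, h0⟩

lemma K_normal (n : ℕ) (hn : 2 ≤ n) : (⨆ j : ℤ, Ssub n j).Normal := by
  rw [← Subgroup.normalizer_eq_top_iff]
  rw [eq_top_iff]
  intro x _
  refine PresentedGroup.generated_by _ _ (fun i => ?_) x
  rcases Nat.eq_zero_or_pos i with hi | hi
  · subst hi
    rw [Subgroup.mem_normalizer_iff]
    intro h
    constructor
    · intro hh
      obtain ⟨j, m, hm, rfl⟩ := (Subgroup.mem_iSup_of_directed (Ssub_directed n hn)).1 hh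
      refine (Subgroup.mem_iSup_of_directed (Ssub_directed n hn)).2 ⟨j - 1, ?_⟩
      have key : (PresentedGroup.of 0 : FnInfty n) *
          ((MulAut.conj (((xg n 0) ^ j)⁻¹)).toMonoidHom m) * (PresentedGroup.of 0)⁻¹
          = ((xg n 0) ^ (j - 1))⁻¹ * m * (xg n 0) ^ (j - 1) := by
        show (xg n 0) * (((xg n 0) ^ j)⁻¹ * m * (((xg n 0) ^ j)⁻¹)⁻¹) * (xg n 0)⁻¹ = _
        group
      rw [key]
      exact mem_Ssub n (j - 1) hm
    · intro hh
      obtain ⟨j, m, hm, heq⟩ := (Subgroup.mem_iSup_of_directed (Ssub_directed n hn)).1 hh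
      refine (Subgroup.mem_iSup_of_directed (Ssub_directed n hn)).2 ⟨j + 1, ?_⟩
      have heq2 : ((xg n 0) ^ j)⁻¹ * m * (((xg n 0) ^ j)⁻¹)⁻¹
          = (xg n 0) * h * (xg n 0)⁻¹ := heq
      rw [inv_inv] at heq2
      have key : h = (xg n 0)⁻¹ * (((xg n 0) ^ j)⁻¹ * m * (xg n 0) ^ j) * xg n 0 := by
        rw [heq2]; group
      have e : (xg n 0)⁻¹ * (((xg n 0) ^ j)⁻¹ * m * (xg n 0) ^ j) * xg n 0
          = ((xg n 0) ^ (j + 1))⁻¹ * m * (xg n 0) ^ (j + 1) := by group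
      rw [key, e]
      exact mem_Ssub n (j + 1) hm
  · exact Subgroup.le_normalizer (xg_mem_K n hn i hi)

/-- The exponent-sum-of-`x_0` homomorphism. -/
noncomputable def fhom (n : ℕ) (hn : 2 ≤ n) : FnInfty n →* Multiplicative ℤ :=
  PresentedGroup.toGroup (f := fun i => if i = 0 then Multiplicative.ofAdd (1 : ℤ) else 1)
    (by
      rintro r ⟨i, j, hij, rfl⟩
      have hi : i ≠ 0 := by omega
      have hin : i + n - 1 ≠ 0 := by omega
      by_cases hj : j = 0 <;> simp [hi, hin, hj])

lemma fhom_of (n : ℕ) (hn : 2 ≤ n) (i : ℕ) :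
    fhom n hn (xg n i) = if i = 0 then Multiplicative.ofAdd (1 : ℤ) else 1 :=
  PresentedGroup.toGroup.of _

lemma Msub_le_ker (n : ℕ) (hn : 2 ≤ n) : Msub n ≤ (fhom n hn).ker := by
  rw [Msub, Subgroup.closure_le]
  rintro _ ⟨i, ⟨hi1, _⟩, rfl⟩
  have : fhom n hn (xg n i) = 1 := by
    rw [fhom_of, if_neg (by omega : ¬ i = 0)]
  exact this

lemma K_le_ker (n : ℕ) (hn : 2 ≤ n) : (⨆ j : ℤ, Ssub n j) ≤ (fhom n hn).ker := by
  refine iSup_le fun j => ?_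
  rintro _ ⟨m, hm, rfl⟩
  have hm1 : fhom n hn m = 1 := Msub_le_ker n hn hm
  show fhom n hn (((xg n 0) ^ j)⁻¹ * m * (((xg n 0) ^ j)⁻¹)⁻¹) = 1
  rw [inv_inv, map_mul, map_mul, map_inv, hm1]
  group

lemma ker_le_K (n : ℕ) (hn : 2 ≤ n) : (fhom n hn).ker ≤ ⨆ j : ℤ, Ssub n j := by
  haveI := K_normal n hn
  set K := ⨆ j : ℤ, Ssub n j with hK
  let π := QuotientGroup.mk' K
  let g : Multiplicative ℤ →* FnInfty n ⧸ K := zpowersHom _ (π (xg n 0))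
  have hcomp : g.comp (fhom n hn) = π := by
    apply PresentedGroup.ext
    intro i
    rcases Nat.eq_zero_or_pos i with hi | hi
    · subst hi
      show g (fhom n hn (xg n 0)) = π (xg n 0)
      rw [fhom_of]
      simp [g]
    · show g (fhom n hn (xg n i)) = π (xg n i)
      rw [fhom_of, if_neg (by omega : ¬ i = 0), map_one]
      exact ((QuotientGroup.eq_one_iff _).2 (xg_mem_K n hn i hi)).symm
  intro h hh
  have : π h = 1 := by
    rw [← hcomp]
    show g (fhom n hn h) = 1
    rw [hh, map_one]
  exact (QuotientGroup.eq_one_iff _).1 this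

/-- In `G = F_{n,∞}`, conjugation by `x_0` sends `x_i` to `x_{i+n-1}` for `i ≥ 1`;
consequently `⋃_{j ≥ 0} M^{x_0^j} = M`, and `K = ⋃_{j ∈ ℤ} M^{x_0^j}` is a normal subgroup of
`G` with `G/K` infinite cyclic (it is the kernel of a surjection onto `ℤ`). -/
theorem stmt_8 (n : ℕ) (hn : 2 ≤ n) :
    (∀ i : ℕ, 1 ≤ i → (xg n 0)⁻¹ * xg n i * xg n 0 = xg n (i + n - 1)) ∧
    (⋃ j : ℕ, (fun m => ((xg n 0) ^ (j : ℤ))⁻¹ * m * (xg n 0) ^ (j : ℤ)) ''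
        ((Msub n : Subgroup (FnInfty n)) : Set (FnInfty n)))
      = ((Msub n : Subgroup (FnInfty n)) : Set (FnInfty n)) ∧
    (∃ f : FnInfty n →* Multiplicative ℤ, Function.Surjective f ∧
      ((f.ker : Subgroup (FnInfty n)) : Set (FnInfty n)) =
        ⋃ j : ℤ, (fun m => ((xg n 0) ^ j)⁻¹ * m * (xg n 0) ^ j) ''
          ((Msub n : Subgroup (FnInfty n)) : Set (FnInfty n))) := by
  refine ⟨fun i hi => xg_rel n (by omega), ?_, ?_⟩
  · apply Set.Subset.antisymm
    · refine Set.iUnion_subset fun j => ?_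
      rintro _ ⟨m, hm, rfl⟩
      simp only [zpow_natCast]
      exact conj_pow_mem n hn j hm
    · intro m hm
      refine Set.mem_iUnion.2 ⟨0, ⟨m, hm, ?_⟩⟩
      simp
  · refine ⟨fhom n hn, ?_, ?_⟩
    · intro z
      refine ⟨(xg n 0) ^ (Multiplicative.toAdd z), ?_⟩
      rw [map_zpow, fhom_of, if_pos rfl, ← ofAdd_zsmul]
      simp
    · have hker : (fhom n hn).ker = ⨆ j : ℤ, Ssub n j :=
        le_antisymm (ker_le_K n hn) (K_le_ker n hn)
      rw [hker, Subgroup.coe_iSup_of_directed (Ssub_directed n hn)]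
      exact Set.iUnion_congr fun j => Ssub_coe n j
end

section
/- Let G = F_{n,∞} and M = ⟨x_1, x_2, ..., x_n⟩ ≤ G. Then the map sending x_i to x_{i-1} for i ≥ 1 extends to a group isomorphism θ : M → G. -/
/-!
The shift `x_i ↦ x_{i+1}` preserves the defining relations, so it is an endomorphism `σ` of
`F_{n,∞}`; its image is `M`, because for `m > n` the generator `x_m` is the conjugate
`x_1⁻¹ x_{m-n+1} x_1` of a smaller one. The inverse of `σ : F_{n,∞} ≃ M` is `θ`.

Injectivity of `σ` is the real content. Positive words have normal forms `x_{b₁} ⋯ x_{bₖ}` with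
`b₁ ≤ ⋯ ≤ bₖ`, and left multiplication by `x_a` on normal forms realises the positive monoid as a
monoid of maps. That monoid is cancellative and has common right multiples, so it embeds in its
group of fractions, through which `F_{n,∞}` maps; hence two positive words are equal in `F_{n,∞}`
only if their normal forms agree. Common multiples also write every element as `p q⁻¹` with `p, q`
positive, and normal forms commute with the shift, so `σ (p q⁻¹) = 1` forces `p = q`.
-/

theorem OreLocalization.numeratorHom_injective {R : Type*} [Monoid R] [IsLeftCancelMul R]
    {S : Submonoid R} [OreSet S] :
    Function.Injective (numeratorHom : R →* OreLocalization S R) := by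
  intro r₁ r₂ h
  obtain ⟨u, v, h₁, h₂⟩ := oreDiv_eq_iff.1 h
  simp only [OneMemClass.coe_one, mul_one] at h₂
  subst h₂
  exact (mul_left_cancel h₁).symm

namespace Thompson

/-- Left multiplication by `x_a` on a normal form `x_{b₁} ⋯ x_{bₖ}` (`b₁ ≤ ⋯ ≤ bₖ`), which moves
`x_a` to the right using `x_a x_b = x_b x_{a+d}` for `b < a`; in `F_{n,∞}` the shift is
`d = n - 1`. -/
def ins (d : ℕ) : ℕ → List ℕ → List ℕ
  | a, [] => [a]
  | a, b :: t => if a ≤ b then a :: b :: t else b :: ins d (a + d) t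

def act (d : ℕ) (l w : List ℕ) : List ℕ := l.foldr (ins d) w

def nf (d : ℕ) (l : List ℕ) : List ℕ := act d l []

variable {d : ℕ}

lemma ins_of_forall_le {a : ℕ} {w : List ℕ} (h : ∀ x ∈ w, a ≤ x) :
    ins d a w = a :: w := by
  cases w with
  | nil => rfl
  | cons b t => simp [ins, h b List.mem_cons_self]

lemma ins_cons_of_le {a b : ℕ} (h : a ≤ b) (t : List ℕ) : ins d a (b :: t) = a :: b :: t := by
  simp [ins, h]

lemma ins_cons_of_lt {a b : ℕ} (h : b < a) (t : List ℕ) :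
    ins d a (b :: t) = b :: ins d (a + d) t := by
  simp [ins, Nat.not_le.2 h]

lemma ins_ne_nil (a : ℕ) (w : List ℕ) : ins d a w ≠ [] := by
  cases w with
  | nil => simp [ins]
  | cons b t => unfold ins; split_ifs <;> simp

lemma ins_injective (a : ℕ) : Function.Injective (ins d a) := by
  intro w w' h
  induction w generalizing a w' with
  | nil =>
    cases w' with
    | nil => rfl
    | cons b t =>
      unfold ins at h
      split_ifs at h <;> simp [eq_comm (a := []), ins_ne_nil] at h
  | cons b t ih =>
    cases w' with
    | nil =>
      unfold ins at h
      split_ifs at h <;> simp [ins_ne_nil] at h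
    | cons b' t' =>
      unfold ins at h
      split_ifs at h <;> simp only [List.cons.injEq] at h
      · rw [h.2.1, h.2.2]
      · omega
      · omega
      · rw [h.1, ih _ h.2]

lemma mem_ins {a x : ℕ} {w : List ℕ} (hx : x ∈ ins d a w) : x ∈ w ∨ a ≤ x := by
  induction w generalizing a with
  | nil => simp_all [ins]
  | cons b t ih =>
    unfold ins at hx
    split_ifs at hx
    · simp only [List.mem_cons] at hx ⊢
      rcases hx with rfl | hx
      · exact .inr le_rfl
      · exact .inl hx
    · simp only [List.mem_cons] at hx ⊢
      rcases hx with hx | hx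
      · exact .inl (.inl hx)
      · rcases ih hx with hx | hx
        · exact .inl (.inr hx)
        · exact .inr (by omega)

lemma pairwise_ins {w : List ℕ} (hw : w.Pairwise (· ≤ ·)) (a : ℕ) :
    (ins d a w).Pairwise (· ≤ ·) := by
  induction w generalizing a with
  | nil => simp [ins]
  | cons b t ih =>
    rw [List.pairwise_cons] at hw
    unfold ins
    split_ifs with hab
    · exact List.pairwise_cons.2
        ⟨List.forall_mem_cons.2 ⟨hab, fun x hx => hab.trans (hw.1 x hx)⟩, List.pairwise_cons.2 hw⟩
    · refine List.pairwise_cons.2 ⟨fun x hx => ?_, ih hw.2 _⟩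
      rcases mem_ins hx with hx | hx
      · exact hw.1 x hx
      · omega

lemma ins_comm (w : List ℕ) {i j : ℕ} (h : j < i) :
    ins d i (ins d j w) = ins d j (ins d (i + d) w) := by
  induction w generalizing i j with
  | nil => rw [ins, ins, ins_cons_of_lt h, ins, ins_cons_of_le (by omega)]
  | cons b t ih =>
    by_cases hjb : j ≤ b
    · rw [ins_cons_of_le hjb, ins_cons_of_lt h]
      by_cases hib : i + d ≤ b
      · rw [ins_cons_of_le hib, ins_cons_of_le (by omega)]
      · rw [ins_cons_of_lt (by omega), ins_cons_of_le hjb]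
    · rw [ins_cons_of_lt (by omega), ins_cons_of_lt (by omega), ins_cons_of_lt (by omega),
        ins_cons_of_lt (by omega), ih (by omega)]

lemma ins_map_add (c a : ℕ) (w : List ℕ) :
    ins d (a + c) (w.map (· + c)) = (ins d a w).map (· + c) := by
  induction w generalizing a with
  | nil => rfl
  | cons b t ih =>
    by_cases h : a ≤ b
    · simp [ins, h]
    · simp [ins, h, show a + c + d = a + d + c by omega, ih]

@[simp] lemma act_nil (w : List ℕ) : act d [] w = w := rfl

@[simp] lemma act_cons (a : ℕ) (l w : List ℕ) : act d (a :: l) w = ins d a (act d l w) := rfl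

lemma act_append (u v w : List ℕ) : act d (u ++ v) w = act d u (act d v w) :=
  List.foldr_append ..

lemma act_injective (l : List ℕ) : Function.Injective (act d l) := by
  induction l with
  | nil => exact Function.injective_id
  | cons a l ih => exact (ins_injective a).comp ih

lemma pairwise_act (l : List ℕ) {w : List ℕ} (hw : w.Pairwise (· ≤ ·)) :
    (act d l w).Pairwise (· ≤ ·) := by
  induction l with
  | nil => exact hw
  | cons a l ih => exact pairwise_ins ih a

lemma pairwise_nf (l : List ℕ) : (nf d l).Pairwise (· ≤ ·) :=
  pairwise_act l List.Pairwise.nil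

lemma act_ins (a : ℕ) (l w : List ℕ) : act d (ins d a l) w = ins d a (act d l w) := by
  induction l generalizing a with
  | nil => rfl
  | cons b t ih =>
    by_cases h : a ≤ b
    · rw [ins_cons_of_le h]; rfl
    · rw [ins_cons_of_lt (by omega), act_cons, act_cons, ih, ins_comm _ (by omega : b < a)]

lemma act_act (u v w : List ℕ) : act d (act d u v) w = act d u (act d v w) := by
  induction u with
  | nil => rfl
  | cons a u ih => rw [act_cons, act_ins, ih, act_cons]

lemma act_nf (l : List ℕ) : act d (nf d l) = act d l :=
  funext fun w => act_act l [] w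

lemma act_eq_append {p w : List ℕ} (hp : p.Pairwise (· ≤ ·))
    (h : ∀ x ∈ p, ∀ y ∈ w, x ≤ y) : act d p w = p ++ w := by
  induction p with
  | nil => rfl
  | cons a p ih =>
    rw [List.pairwise_cons] at hp
    rw [act_cons, ih hp.2 fun x hx => h x (List.mem_cons_of_mem a hx), ins_of_forall_le ?_,
      List.cons_append]
    intro x hx
    rcases List.mem_append.1 hx with hx | hx
    · exact hp.1 x hx
    · exact h a List.mem_cons_self x hx

lemma nf_of_pairwise {p : List ℕ} (hp : p.Pairwise (· ≤ ·)) : nf d p = p :=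
  (act_eq_append hp (by simp)).trans (List.append_nil p)

lemma act_map_add (c : ℕ) (u w : List ℕ) :
    act d (u.map (· + c)) (w.map (· + c)) = (act d u w).map (· + c) := by
  induction u with
  | nil => rfl
  | cons a u ih => rw [List.map_cons, act_cons, ih, ins_map_add, act_cons]

lemma nf_map_add (c : ℕ) (l : List ℕ) : nf d (l.map (· + c)) = (nf d l).map (· + c) :=
  act_map_add c l []

lemma act_ins_of_forall_lt {a : ℕ} {q : List ℕ} (h : ∀ b ∈ q, a < b) (w : List ℕ) :
    act d q (ins d a w) = ins d a (act d (q.map (· + d)) w) := by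
  induction q with
  | nil => rfl
  | cons b q ih =>
    rw [List.map_cons, act_cons, ih fun x hx => h x (List.mem_cons_of_mem b hx), act_cons,
      ins_comm _ (h b List.mem_cons_self)]

lemma exists_act_singleton_eq {p : List ℕ} (hp : p.Pairwise (· ≤ ·)) (a : ℕ) :
    ∃ T M : List ℕ, p = T ++ M ∧ (∀ x ∈ T, x ≤ a) ∧ (∀ x ∈ M, a < x) ∧
      act d p [a] = T ++ a :: M.map (· + d) := by
  induction p with
  | nil => exact ⟨[], [], by simp⟩
  | cons b p ih =>
    obtain ⟨hb, hp⟩ := List.pairwise_cons.1 hp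
    obtain ⟨T, M, rfl, hT, hM, hact⟩ := ih hp
    by_cases hba : b ≤ a
    · refine ⟨b :: T, M, rfl, List.forall_mem_cons.2 ⟨hba, hT⟩, hM, ?_⟩
      rw [act_cons, hact, ins_of_forall_le, List.cons_append]
      simp only [List.mem_append, List.mem_cons, List.mem_map] at hb ⊢
      rintro x (hx | rfl | ⟨y, hy, rfl⟩)
      · exact hb x (.inl hx)
      · exact hba
      · exact (hb y (.inr hy)).trans (Nat.le_add_right y d)
    · have hT0 : T = [] := List.eq_nil_iff_forall_not_mem.2 fun x hx => by
        have := hb x (List.mem_append_left M hx)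
        have := hT x hx
        omega
      subst hT0
      refine ⟨[], b :: M, rfl, by simp, List.forall_mem_cons.2 ⟨by omega, hM⟩, ?_⟩
      rw [act_cons, hact, List.nil_append, ins_cons_of_lt (by omega), ins_of_forall_le]
      · rfl
      · simp only [List.nil_append, List.mem_map] at hb ⊢
        rintro _ ⟨y, hy, rfl⟩
        exact Nat.add_le_add_right (hb y hy) d

/-- Right multiplication by `x_a` shifts exactly the letters above `a` by `d`, so it can be
undone by filtering. -/
lemma act_singleton_injOn (a : ℕ) :
    Set.InjOn (act d · [a]) {p | p.Pairwise (· ≤ ·)} := by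
  refine Set.LeftInvOn.injOn (f₁' := fun R =>
    (R.filter (· ≤ a)).dropLast ++ (R.filter (a < ·)).map (· - d)) fun p hp => ?_
  obtain ⟨T, M, rfl, hT, hM, hact⟩ := exists_act_singleton_eq (d := d) hp a
  have hle : (T ++ a :: M.map (· + d)).filter (· ≤ a) = T ++ [a] := by
    rw [List.filter_append, List.filter_eq_self.2 (by simpa using hT),
      List.filter_cons_of_pos (by simp), List.filter_eq_nil_iff.2]
    simp only [List.mem_map, decide_eq_true_eq]
    rintro _ ⟨x, hx, rfl⟩
    have := hM x hx
    omega
  have hgt : (T ++ a :: M.map (· + d)).filter (a < ·) = M.map (· + d) := by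
    rw [List.filter_append, List.filter_eq_nil_iff.2, List.filter_cons_of_neg (by simp),
      List.filter_eq_self.2, List.nil_append]
    · simp only [List.mem_map, decide_eq_true_eq]
      rintro _ ⟨x, hx, rfl⟩
      have := hM x hx
      omega
    · simpa using hT
  simp [hact, hle, hgt, Function.comp_def]

lemma act_nf_injOn (u : List ℕ) : Set.InjOn (act d · (nf d u)) {p | p.Pairwise (· ≤ ·)} := by
  induction u with
  | nil =>
    intro p hp q hq h
    rwa [← nf_of_pairwise (d := d) hp, ← nf_of_pairwise (d := d) hq]
  | cons a u ih =>
    intro p hp q hq h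
    have hpq : act d (act d p [a]) (nf d u) = act d (act d q [a]) (nf d u) := by
      rwa [act_act, act_act]
    have hsingleton := List.pairwise_singleton (· ≤ ·) a
    exact act_singleton_injOn a hp hq
      (ih (pairwise_act p hsingleton) (pairwise_act q hsingleton) hpq)

theorem exists_act_act_eq :
    ∀ {p q : List ℕ}, p.Pairwise (· ≤ ·) → q.Pairwise (· ≤ ·) →
      ∃ c e : List ℕ, ∀ w, act d p (act d c w) = act d q (act d e w)
  | [], q, _, _ => ⟨q, [], fun _ => rfl⟩
  | p, [], _, _ => ⟨[], p, fun _ => rfl⟩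
  | a :: p, b :: q, hp, hq => by
    have hmono : ∀ {l : List ℕ}, l.Pairwise (· ≤ ·) → (l.map (· + d)).Pairwise (· ≤ ·) :=
      List.Pairwise.map _ fun _ _ h => Nat.add_le_add_right h d
    have lt_of_mem : ∀ {x y : ℕ} {l : List ℕ}, (y :: l).Pairwise (· ≤ ·) → x < y →
        ∀ z ∈ y :: l, x < z :=
      fun hl hxy z hz => by
        rcases List.mem_cons.1 hz with rfl | hz
        · exact hxy
        · exact hxy.trans_le ((List.pairwise_cons.1 hl).1 z hz)
    rcases lt_trichotomy a b with hab | rfl | hab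
    · obtain ⟨c, e, h⟩ := exists_act_act_eq hp.of_cons (hmono hq)
      refine ⟨c, a :: e, fun w => ?_⟩
      rw [act_cons a p, h, act_cons a e, act_ins_of_forall_lt (lt_of_mem hq hab)]
    · obtain ⟨c, e, h⟩ := exists_act_act_eq hp.of_cons hq.of_cons
      exact ⟨c, e, fun w => by rw [act_cons, act_cons, h]⟩
    · obtain ⟨c, e, h⟩ := exists_act_act_eq (hmono hp) hq.of_cons
      refine ⟨b :: c, e, fun w => ?_⟩
      rw [act_cons b c, act_ins_of_forall_lt (lt_of_mem hp hab), h, act_cons b q]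
termination_by p q => p.length + q.length

def positiveMonoid (d : ℕ) : Submonoid (Function.End (List ℕ)) where
  carrier := Set.range (act d)
  one_mem' := ⟨[], rfl⟩
  mul_mem' := by
    rintro _ _ ⟨l, rfl⟩ ⟨m, rfl⟩
    exact ⟨l ++ m, funext (act_append l m)⟩

def posOf (d : ℕ) (l : List ℕ) : positiveMonoid d := ⟨act d l, l, rfl⟩

@[simp] lemma posOf_nil : posOf d [] = 1 := rfl

lemma posOf_append (l m : List ℕ) : posOf d (l ++ m) = posOf d l * posOf d m :=
  Subtype.ext (funext (act_append l m))

lemma posOf_pair_of_lt {i j : ℕ} (h : j < i) : posOf d [i, j] = posOf d [j, i + d] :=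
  Subtype.ext (funext fun w => ins_comm w h)

lemma exists_pairwise_eq_act (f : positiveMonoid d) :
    ∃ p : List ℕ, p.Pairwise (· ≤ ·) ∧ (f : Function.End (List ℕ)) = act d p := by
  obtain ⟨_, l, rfl⟩ := f
  exact ⟨nf d l, pairwise_nf l, (act_nf l).symm⟩

instance : IsCancelMul (positiveMonoid d) where
  mul_left_cancel := by
    rintro ⟨_, l, rfl⟩ g h hgh
    exact Subtype.ext <| funext fun w => act_injective l (congrFun (congrArg Subtype.val hgh) w)
  mul_right_cancel := by
    rintro ⟨_, u, rfl⟩ g h hgh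
    obtain ⟨p, hp, hg⟩ := exists_pairwise_eq_act g
    obtain ⟨q, hq, hh⟩ := exists_pairwise_eq_act h
    have hpq : act d p (nf d u) = act d q (nf d u) := by
      rw [← hg, ← hh]
      exact congrFun (congrArg Subtype.val hgh) []
    exact Subtype.ext <| by rw [hg, hh, act_nf_injOn u hp hq hpq]

lemma exists_mul_eq_mul (f g : positiveMonoid d) : ∃ c e : positiveMonoid d, f * c = g * e := by
  obtain ⟨p, hp, hf⟩ := exists_pairwise_eq_act f
  obtain ⟨q, hq, hg⟩ := exists_pairwise_eq_act g
  obtain ⟨c, e, h⟩ := exists_act_act_eq hp hq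
  exact ⟨posOf d c, posOf d e, Subtype.ext <| funext fun w => by
    simp only [Submonoid.coe_mul, hf, hg]
    exact h w⟩

/- Mathlib localises at left fractions `s⁻¹ r`, whereas the positive monoid has common right
multiples, so we localise its opposite. -/
open MulOpposite OreLocalization in
noncomputable instance : OreSet (⊤ : Submonoid (positiveMonoid d)ᵐᵒᵖ) :=
  Classical.choice <| nonempty_oreSet_iff.2
    ⟨fun _ _ _ h => ⟨1, by rw [mul_right_cancel h]⟩, fun r s => by
      obtain ⟨c, e, h⟩ := exists_mul_eq_mul r.unop (s : (positiveMonoid d)ᵐᵒᵖ).unop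
      exact ⟨op e, ⟨op c, trivial⟩, unop_injective h⟩⟩

abbrev Fractions (d : ℕ) :=
  OreLocalization (⊤ : Submonoid (positiveMonoid d)ᵐᵒᵖ) (positiveMonoid d)ᵐᵒᵖ

open OreLocalization in
noncomputable def toUnits (d : ℕ) : (positiveMonoid d)ᵐᵒᵖ →* (Fractions d)ˣ :=
  Units.liftRight numeratorHom (fun r => numeratorUnit ⟨r, trivial⟩) fun _ => rfl

lemma toUnits_injective {d : ℕ} : Function.Injective (toUnits d) :=
  fun _ _ h => OreLocalization.numeratorHom_injective (congrArg Units.val h)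

end Thompson

namespace FnInfty

open Thompson MulOpposite

variable {n : ℕ}

lemma xg_mul_xg_of_lt {i j : ℕ} (h : j < i) : xg n i * xg n j = xg n j * xg n (i + n - 1) := by
  have hrel := PresentedGroup.one_of_mem (show _ ∈ thompsonRels n from ⟨i, j, h, rfl⟩)
  simp only [map_mul, map_inv] at hrel
  rw [mul_inv_eq_one, mul_assoc, inv_mul_eq_iff_eq_mul] at hrel
  exact hrel

def lift {G : Type*} [Group G] (f : ℕ → G)
    (hf : ∀ i j, j < i → f i * f j = f j * f (i + n - 1)) : FnInfty n →* G :=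
  PresentedGroup.toGroup <| by
    rintro _ ⟨i, j, h, rfl⟩
    simp only [map_mul, map_inv, FreeGroup.lift_apply_of]
    rw [mul_assoc _ (f i), hf i j h, inv_mul_cancel_left, mul_inv_cancel]

@[simp] lemma lift_xg {G : Type*} [Group G] (f : ℕ → G)
    (hf : ∀ i j, j < i → f i * f j = f j * f (i + n - 1)) (i : ℕ) : lift f hf (xg n i) = f i :=
  PresentedGroup.toGroup.of _

def ofList (n : ℕ) (l : List ℕ) : FnInfty n := (l.map (xg n)).prod

@[simp] lemma ofList_nil : ofList n [] = 1 := rfl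

@[simp] lemma ofList_cons (a : ℕ) (l : List ℕ) : ofList n (a :: l) = xg n a * ofList n l := by
  simp [ofList]

@[simp] lemma ofList_append (l m : List ℕ) : ofList n (l ++ m) = ofList n l * ofList n m := by
  simp [ofList]

lemma ofList_ins (hn : n ≠ 0) (a : ℕ) (w : List ℕ) :
    ofList n (ins (n - 1) a w) = xg n a * ofList n w := by
  induction w generalizing a with
  | nil => rfl
  | cons b t ih =>
    by_cases h : a ≤ b
    · rw [ins_cons_of_le h]; rfl
    · rw [ins_cons_of_lt (by omega), ofList_cons, ih, ofList_cons, ← mul_assoc, ← mul_assoc,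
        xg_mul_xg_of_lt (by omega : b < a), Nat.add_sub_assoc (Nat.one_le_iff_ne_zero.2 hn)]

lemma ofList_act (hn : n ≠ 0) (l w : List ℕ) :
    ofList n (act (n - 1) l w) = ofList n l * ofList n w := by
  induction l with
  | nil => simp
  | cons a l ih => rw [act_cons, ofList_ins hn, ih, ofList_cons, mul_assoc]

lemma ofList_nf (hn : n ≠ 0) (l : List ℕ) : ofList n (nf (n - 1) l) = ofList n l :=
  (ofList_act hn l []).trans (mul_one _)

lemma exists_ofList_mul_eq (hn : n ≠ 0) (p q : List ℕ) :
    ∃ c e : List ℕ, ofList n p * ofList n c = ofList n q * ofList n e := by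
  obtain ⟨c, e, h⟩ :=
    exists_act_act_eq (d := n - 1) (pairwise_nf (d := n - 1) p) (pairwise_nf (d := n - 1) q)
  refine ⟨c, e, ?_⟩
  simpa only [ofList_act hn, ofList_nf hn, ofList_nil, mul_one] using congrArg (ofList n) (h [])

lemma exists_eq_ofList_mul_inv (hn : n ≠ 0) (g : FnInfty n) :
    ∃ p q : List ℕ, g = ofList n p * (ofList n q)⁻¹ := by
  have hg : g ∈ Subgroup.closure (Set.range (xg n)) := by
    rw [show Set.range (xg n) = Set.range PresentedGroup.of from rfl,
      PresentedGroup.closure_range_of]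
    trivial
  induction hg using Subgroup.closure_induction with
  | mem _ hx =>
    obtain ⟨i, rfl⟩ := hx
    exact ⟨[i], [], by simp⟩
  | one => exact ⟨[], [], by simp⟩
  | mul _ _ _ _ hx hy =>
    obtain ⟨p, q, rfl⟩ := hx
    obtain ⟨p', q', rfl⟩ := hy
    obtain ⟨c, e, h⟩ := exists_ofList_mul_eq hn q p'
    have hswap : (ofList n q)⁻¹ * ofList n p' = ofList n c * (ofList n e)⁻¹ := by
      rw [inv_mul_eq_iff_eq_mul, ← mul_assoc, h, mul_inv_cancel_right]
    refine ⟨p ++ c, q' ++ e, ?_⟩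
    rw [ofList_append, ofList_append, mul_inv_rev]
    calc ofList n p * (ofList n q)⁻¹ * (ofList n p' * (ofList n q')⁻¹)
        = ofList n p * ((ofList n q)⁻¹ * ofList n p') * (ofList n q')⁻¹ := by group
      _ = ofList n p * ofList n c * ((ofList n e)⁻¹ * (ofList n q')⁻¹) := by rw [hswap]; group
  | inv _ _ hx =>
    obtain ⟨p, q, rfl⟩ := hx
    exact ⟨q, p, by rw [mul_inv_rev, inv_inv]⟩

noncomputable def toFractions (hn : n ≠ 0) : FnInfty n →* (Fractions (n - 1))ˣ :=
  lift (fun i => (toUnits (n - 1) (op (posOf (n - 1) [i])))⁻¹) fun i j h => by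
    rw [← mul_inv_rev, ← mul_inv_rev, ← map_mul, ← map_mul, ← op_mul, ← op_mul, ← posOf_append,
      ← posOf_append, List.singleton_append, List.singleton_append, posOf_pair_of_lt h,
      Nat.add_sub_assoc (Nat.one_le_iff_ne_zero.2 hn)]

lemma toFractions_ofList (hn : n ≠ 0) (l : List ℕ) :
    toFractions hn (ofList n l) = (toUnits (n - 1) (op (posOf (n - 1) l)))⁻¹ := by
  induction l with
  | nil => simp
  | cons a l ih =>
    rw [ofList_cons, map_mul, ih, toFractions, lift_xg, ← mul_inv_rev, ← map_mul, ← op_mul,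
      ← posOf_append, List.singleton_append]

theorem ofList_eq_ofList_iff (hn : n ≠ 0) {p q : List ℕ} :
    ofList n p = ofList n q ↔ nf (n - 1) p = nf (n - 1) q := by
  refine ⟨fun h => ?_, fun h => by rw [← ofList_nf hn p, h, ofList_nf hn]⟩
  have hpq := congrArg (toFractions hn) h
  rw [toFractions_ofList, toFractions_ofList, inv_inj] at hpq
  exact congrFun (congrArg Subtype.val (op_injective (toUnits_injective hpq))) []

def shift (n : ℕ) : FnInfty n →* FnInfty n :=
  lift (fun i => xg n (i + 1)) fun i j h => by
    rw [xg_mul_xg_of_lt (by omega : j + 1 < i + 1), show i + 1 + n - 1 = i + n - 1 + 1 by omega]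

@[simp] lemma shift_xg (i : ℕ) : shift n (xg n i) = xg n (i + 1) := lift_xg ..

lemma shift_ofList (l : List ℕ) : shift n (ofList n l) = ofList n (l.map (· + 1)) := by
  induction l with
  | nil => simp
  | cons a l ih => simp [ih]

theorem shift_injective (hn : n ≠ 0) : Function.Injective (shift n) := by
  rw [injective_iff_map_eq_one]
  intro g hg
  obtain ⟨p, q, rfl⟩ := exists_eq_ofList_mul_inv hn g
  rw [map_mul, map_inv, mul_inv_eq_one, shift_ofList, shift_ofList, ofList_eq_ofList_iff hn,
    nf_map_add, nf_map_add] at hg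
  rw [mul_inv_eq_one, ofList_eq_ofList_iff hn]
  exact List.map_injective_iff.2 (add_left_injective 1) hg

lemma xg_mem_Msub (hn : 2 ≤ n) {i : ℕ} (hi : 1 ≤ i) : xg n i ∈ Msub n := by
  induction i using Nat.strong_induction_on with
  | _ i ih =>
    by_cases h : i ≤ n
    · exact Subgroup.subset_closure ⟨i, ⟨hi, h⟩, rfl⟩
    · have h1 : xg n 1 ∈ Msub n := Subgroup.subset_closure ⟨1, ⟨le_rfl, by omega⟩, rfl⟩
      have hconj : xg n i = (xg n 1)⁻¹ * xg n (i - n + 1) * xg n 1 := by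
        rw [mul_assoc, xg_mul_xg_of_lt (by omega : 1 < i - n + 1), inv_mul_cancel_left,
          show i - n + 1 + n - 1 = i by omega]
      rw [hconj]
      exact mul_mem (mul_mem (inv_mem h1) (ih _ (by omega) (by omega))) h1

theorem range_shift (hn : 2 ≤ n) : (shift n).range = Msub n := by
  apply le_antisymm
  · rw [MonoidHom.range_eq_map, ← PresentedGroup.closure_range_of, MonoidHom.map_closure,
      Subgroup.closure_le]
    rintro _ ⟨_, ⟨i, rfl⟩, rfl⟩
    exact xg_mem_Msub hn (Nat.le_add_left 1 i)
  · rw [Msub, Subgroup.closure_le]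
    rintro _ ⟨i, ⟨hi, -⟩, rfl⟩
    exact ⟨xg n (i - 1), by rw [shift_xg, Nat.sub_add_cancel hi]⟩

end FnInfty

/-- The map sending `x_i ↦ x_{i-1}` (for `i ≥ 1`) extends to a group isomorphism
`θ : M ≃ F_{n,∞}`, where `M = ⟨x_1, ..., x_n⟩`. -/
theorem stmt_9 (n : ℕ) (hn : 2 ≤ n) :
    ∃ θ : ↥(Msub n) ≃* FnInfty n,
      ∀ i : ℕ, 1 ≤ i → ∀ h : xg n i ∈ Msub n, θ ⟨xg n i, h⟩ = xg n (i - 1) := by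
  let e : FnInfty n ≃* Msub n :=
    (MonoidHom.ofInjective (FnInfty.shift_injective (by omega))).trans
      (MulEquiv.subgroupCongr (FnInfty.range_shift hn))
  refine ⟨e.symm, fun i hi h => e.symm_apply_eq.2 (Subtype.ext ?_)⟩
  change xg n i = FnInfty.shift n (xg n (i - 1))
  rw [FnInfty.shift_xg, Nat.sub_add_cancel hi]
end

section
/- Let G = F_{n,∞} and let χ : G → ℝ be a homomorphism such that the homomorphism χ_1 (with χ_1(x_0) = −1, χ_1(x_i) = 0 for i ≥ 1) vanishes on ker χ. Write v_i = χ(x_i) for 0 ≤ i ≤ n−1. Then ℤv_0 ∩ (Σ_{1 ≤ i ≤ n−1} ℤv_i) = 0 and v_0 ≠ 0, so Im(χ) = ℤv_0 ⊕ (Σ_{1 ≤ i ≤ n−1} ℤv_i) as subgroups of ℝ. -/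
section MapMul

variable {G A : Type*} [Group G]

def addMonoidHomOfMapMul [AddGroup A] {f : G → A} (hf : ∀ a b, f (a * b) = f a + f b) :
    Additive G →+ A :=
  AddMonoidHom.mk' (fun a => f a.toMul) fun a b => hf a.toMul b.toMul

theorem map_one_of_map_mul [AddGroup A] {f : G → A} (hf : ∀ a b, f (a * b) = f a + f b) :
    f 1 = 0 :=
  (addMonoidHomOfMapMul hf).map_zero

theorem map_inv_of_map_mul [AddGroup A] {f : G → A} (hf : ∀ a b, f (a * b) = f a + f b)
    (a : G) : f a⁻¹ = -f a :=
  (addMonoidHomOfMapMul hf).map_neg (Additive.ofMul a)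

theorem map_inv_mul_mul_of_map_mul [AddCommGroup A] {f : G → A}
    (hf : ∀ a b, f (a * b) = f a + f b) (a b : G) : f (b⁻¹ * a * b) = f a := by
  rw [hf, hf, map_inv_of_map_mul hf]
  abel

theorem range_eq_closure_image_of_map_mul [AddGroup A] {f : G → A}
    (hf : ∀ a b, f (a * b) = f a + f b) {S : Set G} (hS : Subgroup.closure S = ⊤) :
    Set.range f = AddSubgroup.closure (f '' S) := by
  apply subset_antisymm
  · rintro _ ⟨g, rfl⟩
    induction (hS ▸ Subgroup.mem_top g : g ∈ Subgroup.closure S)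
      using Subgroup.closure_induction with
    | mem s hs => exact AddSubgroup.subset_closure ⟨s, hs, rfl⟩
    | one => exact (map_one_of_map_mul hf).symm ▸ zero_mem _
    | mul a b _ _ ha hb => rw [hf]; exact add_mem ha hb
    | inv a _ ha => rw [map_inv_of_map_mul hf]; exact neg_mem ha
  · intro y hy
    obtain ⟨g, hg⟩ := (AddSubgroup.closure_le (addMonoidHomOfMapMul hf).range).mpr
      (Set.image_subset_range _ _) hy
    exact ⟨g.toMul, hg⟩

theorem zmultiples_inf_closure_image_eq_bot [AddCommGroup A] {B : Type*} [AddCommGroup B]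
    [IsAddTorsionFree B] {f : G → A} {f₁ : G → B}
    (hf : ∀ a b, f (a * b) = f a + f b) (hf₁ : ∀ a b, f₁ (a * b) = f₁ a + f₁ b)
    (hker : ∀ g, f g = 0 → f₁ g = 0) {x : G} (hx : f₁ x ≠ 0) {S : Set G}
    (hS : ∀ s ∈ S, f₁ s = 0) :
    AddSubgroup.zmultiples (f x) ⊓ AddSubgroup.closure (f '' S) = ⊥ := by
  set φ := addMonoidHomOfMapMul hf
  set φ₁ := addMonoidHomOfMapMul hf₁
  have hcl : AddSubgroup.closure (f '' S) ≤ φ₁.ker.map φ := by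
    refine (AddSubgroup.closure_le _).mpr ?_
    rintro _ ⟨s, hs, rfl⟩
    exact ⟨Additive.ofMul s, hS s hs, rfl⟩
  rw [AddSubgroup.eq_bot_iff_forall]
  rintro _ ⟨⟨m, rfl⟩, hy⟩
  obtain ⟨g, hg, hgy⟩ := hcl hy
  have hker_elt : φ (m • Additive.ofMul x - g) = 0 := by
    rw [map_sub, map_zsmul, hgy]
    exact sub_self _
  have hm : φ₁ (m • Additive.ofMul x - g) = 0 := hker _ hker_elt
  rw [map_sub, map_zsmul, AddMonoidHom.mem_ker.mp hg, sub_zero] at hm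
  simp only [(smul_eq_zero.mp hm).resolve_right hx, zero_smul]

end MapMul

theorem xg_inv_mul_mul {n i j : ℕ} (hji : j < i) :
    (xg n j)⁻¹ * xg n i * xg n j = xg n (i + n - 1) := by
  have h := PresentedGroup.one_of_mem (rels := thompsonRels n) ⟨i, j, hji, rfl⟩
  rw [map_mul, map_mul, map_mul, map_inv, map_inv] at h
  exact mul_inv_eq_one.mp h

theorem map_xg_add_mul_of_map_mul {A : Type*} [AddCommGroup A] {n : ℕ} (hn : 1 ≤ n)
    {f : FnInfty n → A} (hf : ∀ a b, f (a * b) = f a + f b) {i : ℕ} (hi : 1 ≤ i) (k : ℕ) :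
    f (xg n (i + k * (n - 1))) = f (xg n i) := by
  induction k with
  | zero => simp
  | succ k ih =>
    have hconj := xg_inv_mul_mul (n := n) (show 0 < i + k * (n - 1) by omega)
    rw [show i + (k + 1) * (n - 1) = i + k * (n - 1) + n - 1 by rw [add_one_mul]; omega,
      ← hconj, map_inv_mul_mul_of_map_mul hf, ih]

theorem range_map_xg_of_map_mul {A : Type*} [AddCommGroup A] {n : ℕ} (hn : 2 ≤ n)
    {f : FnInfty n → A} (hf : ∀ a b, f (a * b) = f a + f b) :
    Set.range (fun i => f (xg n i)) =
      insert (f (xg n 0)) ((fun i => f (xg n i)) '' {i | 1 ≤ i ∧ i < n}) := by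
  refine subset_antisymm ?_
    (Set.insert_subset (Set.mem_range_self 0) (Set.image_subset_range _ _))
  rintro _ ⟨_ | i, rfl⟩
  · exact Set.mem_insert _ _
  · have hmod : i % (n - 1) < n - 1 := Nat.mod_lt i (by omega)
    have hdiv : 1 + i % (n - 1) + i / (n - 1) * (n - 1) = i + 1 := by
      have := Nat.mod_add_div i (n - 1)
      rw [mul_comm] at this
      omega
    refine Set.mem_insert_of_mem _ ⟨1 + i % (n - 1), ⟨by omega, by omega⟩, ?_⟩
    rw [← hdiv]
    exact (map_xg_add_mul_of_map_mul (by omega) hf (by omega) _).symm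

/-- Let `χ : F_{n,∞} → ℝ` be a homomorphism such that `χ₁` (where `χ₁(x_0) = -1` and
`χ₁(x_i) = 0` for `i ≥ 1`) vanishes on `ker χ`, and set `v_i = χ(x_i)`. Then `v_0 ≠ 0` and
`ℤv_0 ∩ (∑_{1 ≤ i ≤ n-1} ℤv_i) = 0`, so `Im χ = ℤv_0 ⊕ (∑_{1 ≤ i ≤ n-1} ℤv_i)` inside `ℝ`. -/
theorem stmt_18 (n : ℕ) (hn : 2 ≤ n) (χ χ₁ : FnInfty n → ℝ)
    (hχ : ∀ a b : FnInfty n, χ (a * b) = χ a + χ b)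
    (hχ₁ : ∀ a b : FnInfty n, χ₁ (a * b) = χ₁ a + χ₁ b)
    (hval0 : χ₁ (xg n 0) = -1) (hvali : ∀ i : ℕ, 1 ≤ i → χ₁ (xg n i) = 0)
    (hker : ∀ g : FnInfty n, χ g = 0 → χ₁ g = 0) :
    χ (xg n 0) ≠ 0 ∧
    AddSubgroup.zmultiples (χ (xg n 0)) ⊓
      AddSubgroup.closure ((fun i => χ (xg n i)) '' {i | 1 ≤ i ∧ i < n}) = ⊥ ∧
    Set.range χ =
      ↑(AddSubgroup.zmultiples (χ (xg n 0)) ⊔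
        AddSubgroup.closure ((fun i => χ (xg n i)) '' {i | 1 ≤ i ∧ i < n})) := by
  have hval0_ne : χ₁ (xg n 0) ≠ 0 := by rw [hval0]; norm_num
  refine ⟨fun h => hval0_ne (hker _ h), ?_, ?_⟩
  · rw [← Set.image_image χ (xg n)]
    refine zmultiples_inf_closure_image_eq_bot hχ hχ₁ hker hval0_ne ?_
    rintro _ ⟨i, hi, rfl⟩
    exact hvali i hi.1
  · have hgen : Subgroup.closure (Set.range (xg n)) = ⊤ := PresentedGroup.closure_range_of _
    rw [range_eq_closure_image_of_map_mul hχ hgen, ← Set.range_comp, Function.comp_def,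
      range_map_xg_of_map_mul hn hχ, Set.insert_eq, AddSubgroup.closure_union,
      AddSubgroup.zmultiples_eq_closure]
end
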